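/- arXiv:1703.02465 — 3 statements merged into one kernel-verified Lean document; each statement's English description precedes it below -/
import Mathlib

section
/- Let H be a self-adjoint operator on a separable Hilbert space with orthonormal basis {δ_x}, and let (Q, P) be complementary orthogonal projections. For δ_x ∈ ran(Q), δ_y ∈ ran(P), and E ∉ σ(H) real such that P(H−E)P is invertible on ran(P), one has |⟨δ_x,(H−E)^{-1}δ_y⟩| ≤ ∑_{δ_u ∈ ran(Q), δ_v ∈ ran(P)} |⟨δ_x,(H−E)^{-1}δ_u⟩| · |⟨δ_u, H δ_v⟩| · |⟨δ_v, (P(H−E)P)^{-1} δ_y⟩|. -/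
noncomputable def delta {X : Type*} [DecidableEq X] (x : X) : lp (fun _ : X => ℂ) 2 :=
  lp.single 2 x 1

/-!
Write `A = H - E`. From `P A P G_P = P` and `P G_P = G_P` one gets `A G_P = P + Q H G_P`, because
`Q G_P = Q P G_P = 0`; multiplying by `G` on the left gives the geometric resolvent identity
`G P = G_P - G Q H G_P`. Applied to `δ_y` and paired with `δ_x ∈ ran Q`, which is orthogonal to
`ran G_P ⊆ ran P`, it gives `⟨δ_x, G δ_y⟩ = -⟨δ_x, G Q H G_P δ_y⟩`. Expanding this twice in the
basis, the sum over `u` is confined to `ran Q` by the factor `Q`, and the sum over `v` to `ran P`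
because `G_P δ_y ∈ ran P`. Bounding in `ℝ≥0∞` makes the triangle inequality for these series
unconditional.
-/

theorem IsIdempotentElem.mul_eq_zero_of_add_eq_one {R : Type*} [Ring R] {P Q : R}
    (hP : IsIdempotentElem P) (hPQ : P + Q = 1) : P * Q = 0 ∧ Q * P = 0 := by
  rw [eq_sub_of_add_eq' hPQ]
  exact ⟨hP.mul_one_sub_self, hP.one_sub_mul_self⟩

theorem geometric_resolvent_identity {𝕜 R : Type*} [CommRing 𝕜] [Ring R] [Algebra 𝕜 R]
    {H G Gp P Q : R} {E : 𝕜} (hPQ : P + Q = 1) (hP : IsIdempotentElem P)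
    (hG : G * (H - E • 1) = 1) (hGp : P * ((H - E • 1) * P) * Gp = P) (hGpP : P * Gp = Gp) :
    G * P = Gp - G * (Q * (H * Gp)) := by
  have hQGp : Q * Gp = 0 := by
    rw [← hGpP, ← mul_assoc, (hP.mul_eq_zero_of_add_eq_one hPQ).2, zero_mul]
  have hPAGp : P * ((H - E • 1) * Gp) = P := by
    calc P * ((H - E • 1) * Gp) = P * ((H - E • 1) * (P * Gp)) := by rw [hGpP]
      _ = P * ((H - E • 1) * P) * Gp := by simp only [mul_assoc]
      _ = P := hGp
  have hQAGp : Q * ((H - E • 1) * Gp) = Q * (H * Gp) := by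
    rw [sub_mul, mul_sub, smul_one_mul, mul_smul_comm, hQGp, smul_zero, sub_zero]
  have hAGp : (H - E • 1) * Gp = P + Q * (H * Gp) := by
    calc (H - E • 1) * Gp = P * ((H - E • 1) * Gp) + Q * ((H - E • 1) * Gp) := by
          rw [← add_mul, hPQ, one_mul]
      _ = P + Q * (H * Gp) := by rw [hPAGp, hQAGp]
  calc G * P = G * ((H - E • 1) * Gp) - G * (Q * (H * Gp)) := by rw [hAGp]; noncomm_ring
    _ = Gp - G * (Q * (H * Gp)) := by rw [← mul_assoc, hG, one_mul]

section lp

variable {X : Type*} [DecidableEq X]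

local notation "ℓ²" => lp (fun _ : X => ℂ) 2

theorem inner_delta_left (x : X) (f : ℓ²) : inner ℂ (delta x) f = f x := by
  simp [delta, lp.inner_single_left]

theorem hasSum_apply_mul_delta (T : ℓ² →L[ℂ] ℓ²) (w : ℓ²) (x : X) :
    HasSum (fun u => T (delta u) x * w u) (T w x) := by
  have h := (lp.evalCLM ℂ (fun _ : X => ℂ) 2 x).hasSum
    (T.hasSum (lp.hasSum_single ENNReal.ofNat_ne_top w))
  have key : ∀ u, lp.evalCLM ℂ _ 2 x (T (lp.single 2 u (w u))) = T (delta u) x * w u := by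
    intro u
    change T (lp.single 2 u (w u)) x = _
    rw [← mul_one (w u), ← smul_eq_mul, lp.single_smul, map_smul]
    simp [delta, mul_comm]
  simp only [key] at h
  exact h

theorem apply_eq_inner_apply_delta {T : ℓ² →L[ℂ] ℓ²} (hT : IsSelfAdjoint T) (w : ℓ²) (u : X) :
    T w u = inner ℂ (T (delta u)) w := by
  rw [← inner_delta_left]
  exact (hT.isSymmetric (delta u) w).symm

theorem apply_eq_self_of_apply_delta_eq {T : ℓ² →L[ℂ] ℓ²} (hT : IsSelfAdjoint T) {u : X}
    (hu : T (delta u) = delta u) (w : ℓ²) : T w u = w u := by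
  rw [apply_eq_inner_apply_delta hT, hu, inner_delta_left]

theorem apply_eq_zero_of_apply_delta_eq_zero {T : ℓ² →L[ℂ] ℓ²} (hT : IsSelfAdjoint T) {u : X}
    (hu : T (delta u) = 0) (w : ℓ²) : T w u = 0 := by
  rw [apply_eq_inner_apply_delta hT, hu, inner_zero_left]

theorem enorm_apply_le_tsum_subtype (T : ℓ² →L[ℂ] ℓ²) {p : X → Prop} {w : ℓ²}
    (hw : ∀ u, ¬ p u → w u = 0) (x : X) :
    ‖T w x‖ₑ ≤ ∑' u : {u // p u}, ‖T (delta u.1) x‖ₑ * ‖w u.1‖ₑ := by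
  calc ‖T w x‖ₑ ≤ ∑' u, ‖T (delta u) x * w u‖ₑ :=
        (hasSum_apply_mul_delta T w x).tsum_eq ▸ enorm_tsum_le_tsum_enorm
    _ = ∑' u : {u // p u}, ‖T (delta u.1) x‖ₑ * ‖w u.1‖ₑ := by
      simp only [enorm_mul]
      refine (tsum_subtype_eq_of_support_subset (s := {u | p u}) fun u hu => ?_).symm
      by_contra hpu
      exact hu (by simp [hw u hpu])

end lp

theorem stmt4_general {X : Type*} [DecidableEq X]
    (H G Gp P Q : lp (fun _ : X => ℂ) 2 →L[ℂ] lp (fun _ : X => ℂ) 2)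
    (hP : IsSelfAdjoint P) (hQ : IsSelfAdjoint Q)
    (hPidem : P ∘L P = P) (hPQ : P + Q = 1)
    (hbasis : ∀ u : X, P (delta u) = delta u ∨ Q (delta u) = delta u)
    (E : ℝ)
    (hG2 : G ∘L (H - (E : ℂ) • 1) = 1)
    (hGp1 : (P ∘L (H - (E : ℂ) • 1) ∘L P) ∘L Gp = P)
    (hGpP : P ∘L Gp = Gp)
    (x y : X) (hx : Q (delta x) = delta x) (hy : P (delta y) = delta y) :
    (‖(inner ℂ (delta x) (G (delta y)) : ℂ)‖₊ : ENNReal)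
      ≤ ∑' (u : {u : X // Q (delta u) = delta u})
          (v : {v : X // P (delta v) = delta v}),
          (‖(inner ℂ (delta x) (G (delta u.1)) : ℂ)‖₊ : ENNReal)
          * (‖(inner ℂ (delta u.1) (H (delta v.1)) : ℂ)‖₊ : ENNReal)
          * (‖(inner ℂ (delta v.1) (Gp (delta y)) : ℂ)‖₊ : ENNReal) := by
  obtain ⟨hPQ0, hQP0⟩ := IsIdempotentElem.mul_eq_zero_of_add_eq_one hPidem hPQ
  have hP_delta : ∀ u, Q (delta u) = delta u → P (delta u) = 0 := fun u hu => by
    rw [← hu]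
    exact congrArg (· (delta u)) hPQ0
  have hQ_delta : ∀ u, P (delta u) = delta u → Q (delta u) = 0 := fun u hu => by
    rw [← hu]
    exact congrArg (· (delta u)) hQP0
  set w := Gp (delta y)
  have hPw : P w = w := congrArg (· (delta y)) hGpP
  have hw : ∀ v, Q (delta v) = delta v → w v = 0 := fun v hv => by
    rw [← hPw, apply_eq_zero_of_apply_delta_eq_zero hP (hP_delta v hv)]
  have hresolvent : G (delta y) x = -G (Q (H w)) x := by
    have h := congrArg (· (delta y) x) (geometric_resolvent_identity hPQ hPidem hG2 hGp1 hGpP)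
    simp only [mul_apply_eq_comp, sub_apply, hy, lp.coeFn_sub, Pi.sub_apply] at h
    rw [h, hw x hx, zero_sub]
  simp only [inner_delta_left, ← enorm_eq_nnnorm]
  calc ‖G (delta y) x‖ₑ = ‖G (Q (H w)) x‖ₑ := by rw [hresolvent, enorm_neg]
    _ ≤ ∑' u : {u // Q (delta u) = delta u}, ‖G (delta u.1) x‖ₑ * ‖Q (H w) u.1‖ₑ :=
        enorm_apply_le_tsum_subtype G (fun u hu =>
          apply_eq_zero_of_apply_delta_eq_zero hQ (hQ_delta u ((hbasis u).resolve_right hu)) _) x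
    _ = ∑' u : {u // Q (delta u) = delta u}, ‖G (delta u.1) x‖ₑ * ‖H w u.1‖ₑ :=
        tsum_congr fun u => by rw [apply_eq_self_of_apply_delta_eq hQ u.2]
    _ ≤ ∑' u : {u // Q (delta u) = delta u}, ‖G (delta u.1) x‖ₑ *
          ∑' v : {v // P (delta v) = delta v}, ‖H (delta v.1) u.1‖ₑ * ‖w v.1‖ₑ :=
        ENNReal.tsum_le_tsum fun u => mul_le_mul_right (enorm_apply_le_tsum_subtype H
          (fun v hv => hw v ((hbasis v).resolve_left hv)) u) _
    _ = _ := by simp only [← ENNReal.tsum_mul_left, mul_assoc]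

theorem stmt4 {X : Type*} [Countable X] [DecidableEq X]
    (H G Gp P Q : lp (fun _ : X => ℂ) 2 →L[ℂ] lp (fun _ : X => ℂ) 2)
    (hH : IsSelfAdjoint H) (hP : IsSelfAdjoint P) (hQ : IsSelfAdjoint Q)
    (hPidem : P ∘L P = P) (hQidem : Q ∘L Q = Q) (hPQ : P + Q = 1)
    (hbasis : ∀ u : X, P (delta u) = delta u ∨ Q (delta u) = delta u)
    (E : ℝ)
    (hG1 : (H - (E : ℂ) • 1) ∘L G = 1) (hG2 : G ∘L (H - (E : ℂ) • 1) = 1)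
    (hGp1 : (P ∘L (H - (E : ℂ) • 1) ∘L P) ∘L Gp = P)
    (hGp2 : Gp ∘L (P ∘L (H - (E : ℂ) • 1) ∘L P) = P)
    (hGpP : P ∘L Gp = Gp) (hGpP' : Gp ∘L P = Gp)
    (x y : X) (hx : Q (delta x) = delta x) (hy : P (delta y) = delta y) :
    (‖(inner ℂ (delta x) (G (delta y)) : ℂ)‖₊ : ENNReal)
      ≤ ∑' (u : {u : X // Q (delta u) = delta u})
          (v : {v : X // P (delta v) = delta v}),
          (‖(inner ℂ (delta x) (G (delta u.1)) : ℂ)‖₊ : ENNReal)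
          * (‖(inner ℂ (delta u.1) (H (delta v.1)) : ℂ)‖₊ : ENNReal)
          * (‖(inner ℂ (delta v.1) (Gp (delta y)) : ℂ)‖₊ : ENNReal) :=
  stmt4_general H G Gp P Q hP hQ hPidem hPQ hbasis E hG2 hGp1 hGpP x y hx hy
end

section
/- With X, C, d̄ as above: let y ∈ C, x ∈ X with x₁ ≤ y₁, and let w ∈ X be any configuration containing the site x₁ (i.e. x₁ = w_j for some j). Then d̄(w, y) ≥ y₁ − x₁. -/
open scoped BigOperators

/-- Configurations of `n` hard-core particles in `Λ = [-L, L] ∩ ℤ`. -/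
abbrev Config (n : ℕ) (L : ℤ) : Type :=
  {x : Fin n → ℤ // StrictMono x ∧ ∀ i, -L ≤ x i ∧ x i ≤ L}

/-- The ℓ¹-distance between configurations. -/
noncomputable def ell1 {n : ℕ} {L : ℤ} (x y : Config n L) : ℝ :=
  ∑ i, |((x.1 i - y.1 i : ℤ) : ℝ)|

/-- A configuration is clustered iff it consists of consecutive sites. -/
def IsClustered {n : ℕ} {L : ℤ} (x : Config n L) : Prop :=
  ∀ i j : Fin n, x.1 j - x.1 i = (j : ℤ) - (i : ℤ)

/-- `d̄(x,y) = min over clustered w, v of d(x,w) + |w₁ - v₁| + d(v,y)`. -/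
noncomputable def dbar {n : ℕ} {L : ℤ} (hn : 0 < n) (x y : Config n L) : ℝ :=
  sInf {r : ℝ | ∃ w v : Config n L, IsClustered w ∧ IsClustered v ∧
    r = ell1 x w + |((w.1 ⟨0, hn⟩ - v.1 ⟨0, hn⟩ : ℤ) : ℝ)| + ell1 v y}

/-- `D = min{d, d̄}`. -/
noncomputable def Ddist {n : ℕ} {L : ℤ} (hn : 0 < n) (x y : Config n L) : ℝ :=
  min (ell1 x y) (dbar hn x y)

/-! Every summand `d(w,u) + |u₁ - v₁| + d(v,y)` in `d̄(w,y)` telescopes past `y₁ − x₁`: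
`d(w,u) ≥ u_j − w_j ≥ u₁ − x₁`, `|u₁ − v₁| ≥ v₁ − u₁` and `d(v,y) ≥ y₁ − v₁`. -/

section

variable {n : ℕ} {L : ℤ}

theorem abs_sub_apply_le_ell1 (x y : Config n L) (i : Fin n) :
    |((x.1 i - y.1 i : ℤ) : ℝ)| ≤ ell1 x y :=
  Finset.single_le_sum (f := fun i => |((x.1 i - y.1 i : ℤ) : ℝ)|)
    (fun _ _ => abs_nonneg _) (Finset.mem_univ i)

theorem sub_apply_le_ell1 (x y : Config n L) (i : Fin n) :
    ((y.1 i - x.1 i : ℤ) : ℝ) ≤ ell1 x y := by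
  refine le_trans ?_ (abs_sub_apply_le_ell1 x y i)
  rw [← neg_sub, Int.cast_neg]
  exact neg_le_abs _

theorem Config.apply_zero_le (hn : 0 < n) (u : Config n L) (j : Fin n) :
    u.1 ⟨0, hn⟩ ≤ u.1 j :=
  u.2.1.monotone (Nat.zero_le j)

theorem sub_le_ell1_of_apply_eq (hn : 0 < n) {w : Config n L} {a : ℤ} {j : Fin n}
    (hj : w.1 j = a) (u : Config n L) :
    ((u.1 ⟨0, hn⟩ - a : ℤ) : ℝ) ≤ ell1 w u :=
  le_trans (Int.cast_le.mpr (by rw [← hj]; linarith [u.apply_zero_le hn j]))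
    (sub_apply_le_ell1 w u j)

theorem sub_le_ell1_add_abs_add_ell1 (hn : 0 < n) {w : Config n L} {a : ℤ} {j : Fin n}
    (hj : w.1 j = a) (u v y : Config n L) :
    ((y.1 ⟨0, hn⟩ - a : ℤ) : ℝ) ≤
      ell1 w u + |((u.1 ⟨0, hn⟩ - v.1 ⟨0, hn⟩ : ℤ) : ℝ)| + ell1 v y := by
  have hwu := sub_le_ell1_of_apply_eq hn hj u
  have huv := neg_le_abs ((u.1 ⟨0, hn⟩ - v.1 ⟨0, hn⟩ : ℤ) : ℝ)
  have hvy := sub_apply_le_ell1 v y ⟨0, hn⟩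
  push_cast at hwu huv hvy ⊢
  linarith

end

theorem stmt11_general (n : ℕ) (L : ℤ) (hn : 0 < n)
    (x y w : Config n L) (hy : IsClustered y)
    (hw : ∃ j : Fin n, w.1 j = x.1 ⟨0, hn⟩) :
    ((y.1 ⟨0, hn⟩ - x.1 ⟨0, hn⟩ : ℤ) : ℝ) ≤ dbar hn w y := by
  obtain ⟨j, hj⟩ := hw
  refine le_csInf ⟨_, y, y, hy, hy, rfl⟩ ?_
  rintro _ ⟨u, v, -, -, rfl⟩
  exact sub_le_ell1_add_abs_add_ell1 hn hj u v y

theorem stmt11 (n : ℕ) (L : ℤ) (hn : 0 < n) (hnL : (n : ℤ) ≤ 2 * L + 1)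
    (x y w : Config n L) (hy : IsClustered y)
    (hxy : x.1 ⟨0, hn⟩ ≤ y.1 ⟨0, hn⟩)
    (hw : ∃ j : Fin n, w.1 j = x.1 ⟨0, hn⟩) :
    ((y.1 ⟨0, hn⟩ - x.1 ⟨0, hn⟩ : ℤ) : ℝ) ≤ dbar hn w y :=
  stmt11_general n L hn x y w hy hw
end

section
/- For any μ > 0 and n ≥ 1, sup over clustered configurations x ∈ C (of n consecutive integers in ℤ) of the sum over all strictly increasing n-tuples v ∈ ℤ^n of exp(−μ d(x,v)) is at most (1 − e^{−μ})^{-1} · ∏_{k=1}^∞ (1 − e^{−kμ})^{-2}, where d is the ℓ¹-distance. In particular the bound is uniform in n. -/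
/-!
With `x` clustered, `v ↦ v - x` maps strictly increasing `v` bijectively onto nondecreasing
integer sequences `y`, and `d(x, v) = ∑ |y i|`. The positive parts of `y` and its negative parts
read backwards are two nondecreasing sequences in `ℕ`, i.e. two partitions with at most `n` parts,
so with `q = e^{-μ}` the sum is at most the square of Euler's generating function
`∏_{k ≤ n} (1 - q^k)⁻¹`. Sums are taken in `ℝ≥0∞`, where no summability has to be checked.
-/

open scoped BigOperators

/-- Configurations of `n` hard-core particles on ℤ. -/
abbrev ConfigZ (n : ℕ) : Type := {x : Fin n → ℤ // StrictMono x}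

/-- The ℓ¹-distance between configurations. -/
noncomputable def ell1Z {n : ℕ} (x y : ConfigZ n) : ℝ :=
  ∑ i, |((x.1 i - y.1 i : ℤ) : ℝ)|

/-- A configuration is clustered iff it consists of consecutive sites. -/
def IsClusteredZ {n : ℕ} (x : ConfigZ n) : Prop :=
  ∀ i j : Fin n, x.1 j - x.1 i = (j : ℤ) - (i : ℤ)

open Finset
open scoped ENNReal

abbrev MonoSeq (α : Type*) [Preorder α] (n : ℕ) : Type _ := {b : Fin n → α // Monotone b}

theorem Fin.strictMono_iff_monotone_sub_val {n : ℕ} {f : Fin n → ℤ} :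
    StrictMono f ↔ Monotone fun i => f i - i := by
  cases n with
  | zero => exact ⟨fun _ => Subsingleton.monotone _, fun _ => Subsingleton.strictMono _⟩
  | succ n =>
    rw [Fin.strictMono_iff_lt_succ, Fin.monotone_iff_le_succ]
    refine forall_congr' fun i => ?_
    simp only [Fin.val_castSucc, Fin.val_succ]
    omega

theorem IsClusteredZ.strictMono_iff_monotone_sub {n : ℕ} {x : ConfigZ n} (hx : IsClusteredZ x)
    (v : Fin n → ℤ) : StrictMono v ↔ Monotone (v - x.1) := by
  rw [Fin.strictMono_iff_monotone_sub_val]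
  refine forall₂_congr fun i j => imp_congr_right fun _ => ?_
  have := hx i j
  simp only [Pi.sub_apply]
  omega

def IsClusteredZ.displacementEquiv {n : ℕ} {x : ConfigZ n} (hx : IsClusteredZ x) :
    ConfigZ n ≃ MonoSeq ℤ n :=
  (Equiv.subRight x.1).subtypeEquiv hx.strictMono_iff_monotone_sub

namespace MonoSeq

variable {n : ℕ}

def consEquiv (n : ℕ) : MonoSeq ℕ (n + 1) ≃ ℕ × MonoSeq ℕ n where
  toFun b := (b.1 0, ⟨fun i => b.1 i.succ - b.1 0,
    fun _ _ hij => Nat.sub_le_sub_right (b.2 (Fin.succ_le_succ_iff.mpr hij)) _⟩)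
  invFun p := ⟨Fin.cons p.1 fun i => p.2.1 i + p.1, by
    intro i j hij
    cases i using Fin.cases <;> cases j using Fin.cases
    · rfl
    · simp
    · exact absurd (Fin.le_zero_iff.mp hij) (Fin.succ_ne_zero _)
    · simpa using p.2.2 (Fin.succ_le_succ_iff.mp hij)⟩
  left_inv b := by
    ext i
    cases i using Fin.cases
    · rfl
    · simpa using Nat.sub_add_cancel (b.2 (Fin.zero_le _))
  right_inv p := by ext <;> simp

theorem sum_consEquiv_symm (p : ℕ × MonoSeq ℕ n) :
    ∑ i, ((consEquiv n).symm p).1 i = (n + 1) * p.1 + ∑ i, p.2.1 i := by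
  simp only [consEquiv, Equiv.symm_mk, Equiv.coe_fn_mk, Fin.sum_univ_succ, Fin.cons_zero,
    Fin.cons_succ, sum_add_distrib, sum_const, card_univ, Fintype.card_fin, smul_eq_mul]
  ring

theorem tsum_pow_sum (Q : ℝ≥0∞) (n : ℕ) :
    ∑' b : MonoSeq ℕ n, Q ^ ∑ i, b.1 i = ∏ k ∈ range n, (1 - Q ^ (k + 1))⁻¹ := by
  induction n with
  | zero => simpa [Fintype.card_eq_one_iff] using Subsingleton.monotone _
  | succ n ih =>
    have hweight (p : ℕ × MonoSeq ℕ n) :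
        Q ^ ∑ i, ((consEquiv n).symm p).1 i = (Q ^ (n + 1)) ^ p.1 * Q ^ ∑ i, p.2.1 i := by
      rw [sum_consEquiv_symm, pow_add, pow_mul]
    rw [← (consEquiv n).symm.tsum_eq]
    simp_rw [hweight]
    rw [ENNReal.tsum_prod']
    simp_rw [ENNReal.tsum_mul_left]
    rw [ENNReal.tsum_mul_right, ENNReal.tsum_geometric, ih, prod_range_succ, mul_comm]

def signParts (y : MonoSeq ℤ n) : MonoSeq ℕ n × MonoSeq ℕ n :=
  (⟨fun i => (-y.1 i.rev).toNat, fun _ _ hij => by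
      have := y.2 (Fin.rev_le_rev.mpr hij); dsimp only; omega⟩,
   ⟨fun i => (y.1 i).toNat, fun _ _ hij => by have := y.2 hij; dsimp only; omega⟩)

theorem signParts_injective : Function.Injective (signParts (n := n)) := by
  intro y y' h
  ext i
  have hneg := congrFun (congrArg (fun p => p.1.1) h) i.rev
  have hpos := congrFun (congrArg (fun p => p.2.1) h) i
  simp only [signParts, Fin.rev_rev] at hneg hpos
  omega

theorem sum_natAbs_eq_sum_signParts (y : MonoSeq ℤ n) :
    ∑ i, (y.1 i).natAbs = ∑ i, (signParts y).1.1 i + ∑ i, (signParts y).2.1 i := by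
  have hrev : ∑ i : Fin n, (-y.1 i.rev).toNat = ∑ i, (-y.1 i).toNat :=
    Fintype.sum_equiv Fin.revPerm _ _ fun _ => rfl
  simp only [signParts, hrev, ← Int.toNat_add_toNat_neg_eq_natAbs, sum_add_distrib, add_comm]

theorem tsum_int_pow_sum_natAbs_le (Q : ℝ≥0∞) (n : ℕ) :
    ∑' y : MonoSeq ℤ n, Q ^ ∑ i, (y.1 i).natAbs ≤ (∏ k ∈ range n, (1 - Q ^ (k + 1))⁻¹) ^ 2 :=
  calc ∑' y : MonoSeq ℤ n, Q ^ ∑ i, (y.1 i).natAbs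
      = ∑' y : MonoSeq ℤ n, (Q ^ ∑ i, (signParts y).1.1 i) * Q ^ ∑ i, (signParts y).2.1 i := by
        simp_rw [sum_natAbs_eq_sum_signParts, pow_add]
    _ ≤ ∑' p : MonoSeq ℕ n × MonoSeq ℕ n, (Q ^ ∑ i, p.1.1 i) * Q ^ ∑ i, p.2.1 i :=
        ENNReal.tsum_comp_le_tsum_of_injective signParts_injective _
    _ = (∏ k ∈ range n, (1 - Q ^ (k + 1))⁻¹) ^ 2 := by
        rw [ENNReal.tsum_prod']
        simp_rw [ENNReal.tsum_mul_left]
        rw [ENNReal.tsum_mul_right, tsum_pow_sum, sq]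

end MonoSeq

theorem ofReal_exp_neg_mul_ell1Z {n : ℕ} (μ : ℝ) (x v : ConfigZ n) :
    ENNReal.ofReal (Real.exp (-μ * ell1Z x v)) =
      ENNReal.ofReal (Real.exp (-μ)) ^ ∑ i, (v.1 i - x.1 i).natAbs := by
  have hdist : ell1Z x v = ((∑ i, (v.1 i - x.1 i).natAbs : ℕ) : ℝ) := by
    simp only [ell1Z, Nat.cast_sum, Nat.cast_natAbs, Int.cast_abs, abs_sub_comm]
  rw [hdist, mul_comm, Real.exp_nat_mul, ENNReal.ofReal_pow (Real.exp_pos _).le]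

theorem IsClusteredZ.tsum_ofReal_exp_neg_mul_ell1Z_le {n : ℕ} {x : ConfigZ n}
    (hx : IsClusteredZ x) (μ : ℝ) :
    ∑' v : ConfigZ n, ENNReal.ofReal (Real.exp (-μ * ell1Z x v)) ≤
      (∏ k ∈ range n, (1 - ENNReal.ofReal (Real.exp (-μ)) ^ (k + 1))⁻¹) ^ 2 := by
  set Q := ENNReal.ofReal (Real.exp (-μ))
  simp_rw [ofReal_exp_neg_mul_ell1Z]
  exact (hx.displacementEquiv.tsum_eq fun y => Q ^ ∑ i, (y.1 i).natAbs).trans_le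
    (MonoSeq.tsum_int_pow_sum_natAbs_le Q n)

theorem ofReal_prod_inv_one_sub_pow {q : ℝ} (hq0 : 0 ≤ q) (hq1 : q < 1) (n : ℕ) :
    ENNReal.ofReal (∏ k ∈ range n, (1 - q ^ (k + 1))⁻¹) =
      ∏ k ∈ range n, (1 - ENNReal.ofReal q ^ (k + 1))⁻¹ := by
  have hpos (k : ℕ) : 0 < 1 - q ^ (k + 1) := sub_pos.mpr (pow_lt_one₀ hq0 hq1 k.succ_ne_zero)
  rw [ENNReal.ofReal_prod_of_nonneg fun k _ => (inv_pos.mpr (hpos k)).le]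
  refine prod_congr rfl fun k _ => ?_
  rw [ENNReal.ofReal_inv_of_pos (hpos k), ENNReal.ofReal_sub _ (pow_nonneg hq0 _),
    ENNReal.ofReal_one, ENNReal.ofReal_pow hq0]

theorem tsum_le_of_tsum_ofReal_le {ι : Type*} {f : ι → ℝ} {c : ℝ} (hf : ∀ i, 0 ≤ f i)
    (hc : 0 ≤ c) (h : ∑' i, ENNReal.ofReal (f i) ≤ ENNReal.ofReal c) : ∑' i, f i ≤ c := by
  have hsum : ∑' i, f i = (∑' i, ENNReal.ofReal (f i)).toReal := by
    rw [ENNReal.tsum_toReal_eq fun _ => ENNReal.ofReal_ne_top]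
    simp only [ENNReal.toReal_ofReal (hf _)]
  rw [hsum]
  exact ENNReal.toReal_le_of_le_ofReal hc h

theorem Real.prod_le_tprod_of_one_le {ι : Type*} {f : ι → ℝ} (h1 : ∀ i, 1 ≤ f i)
    (hf : Summable fun i => Real.log (f i)) (s : Finset ι) : ∏ i ∈ s, f i ≤ ∏' i, f i := by
  have hpos (i : ι) : 0 < f i := one_pos.trans_le (h1 i)
  rw [← Real.rexp_tsum_eq_tprod hpos hf, ← Real.exp_log (prod_pos fun i _ => hpos i),
    Real.log_prod fun i _ => (hpos i).ne']
  exact Real.exp_le_exp.mpr (hf.sum_le_tsum s fun i _ => Real.log_nonneg (h1 i))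

theorem summable_log_inv_one_sub_pow {q : ℝ} (hq0 : 0 ≤ q) (hq1 : q < 1) :
    Summable fun k : ℕ => Real.log (1 - q ^ (k + 1))⁻¹ := by
  have hgeom : Summable fun k : ℕ => -q ^ (k + 1) := by
    simpa [pow_succ] using ((summable_geometric_of_lt_one hq0 hq1).mul_right q).neg
  simpa [Real.log_inv, sub_eq_add_neg] using (Real.summable_log_one_add_of_summable hgeom).neg

theorem stmt13_general (μ : ℝ) (hμ : 0 < μ) (n : ℕ)
    (x : ConfigZ n) (hx : IsClusteredZ x) :
    ∑' v : ConfigZ n, Real.exp (-μ * ell1Z x v)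
      ≤ (1 - Real.exp (-μ))⁻¹ *
          (∏' k : ℕ, (1 - Real.exp (-((k : ℝ) + 1) * μ))⁻¹) ^ 2 := by
  set q := Real.exp (-μ)
  have hq0 : 0 ≤ q := (Real.exp_pos _).le
  have hq1 : q < 1 := Real.exp_lt_one_iff.mpr (neg_neg_of_pos hμ)
  have hfactor (k : ℕ) : Real.exp (-((k : ℝ) + 1) * μ) = q ^ (k + 1) := by
    rw [← Real.exp_nat_mul]; push_cast; ring_nf
  have hone (k : ℕ) : 1 ≤ (1 - q ^ (k + 1))⁻¹ :=
    one_le_inv₀ (sub_pos.mpr (pow_lt_one₀ hq0 hq1 k.succ_ne_zero)) |>.mpr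
      (sub_le_self _ (pow_nonneg hq0 _))
  set P := ∏ k ∈ range n, (1 - q ^ (k + 1))⁻¹
  have hP : 0 ≤ P := prod_nonneg fun k _ => zero_le_one.trans (hone k)
  simp_rw [hfactor]
  calc ∑' v : ConfigZ n, Real.exp (-μ * ell1Z x v) ≤ P ^ 2 := by
        refine tsum_le_of_tsum_ofReal_le (fun _ => (Real.exp_pos _).le) (by positivity) ?_
        rw [ENNReal.ofReal_pow hP, ofReal_prod_inv_one_sub_pow hq0 hq1]
        exact hx.tsum_ofReal_exp_neg_mul_ell1Z_le μ
    _ ≤ (∏' k : ℕ, (1 - q ^ (k + 1))⁻¹) ^ 2 :=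
        pow_le_pow_left₀ hP (Real.prod_le_tprod_of_one_le hone
          (summable_log_inv_one_sub_pow hq0 hq1) _) 2
    _ ≤ (1 - q)⁻¹ * (∏' k : ℕ, (1 - q ^ (k + 1))⁻¹) ^ 2 :=
        le_mul_of_one_le_left (by positivity) (by simpa using hone 0)

theorem stmt13 (μ : ℝ) (hμ : 0 < μ) (n : ℕ) (hn : 1 ≤ n)
    (x : ConfigZ n) (hx : IsClusteredZ x) :
    ∑' v : ConfigZ n, Real.exp (-μ * ell1Z x v)
      ≤ (1 - Real.exp (-μ))⁻¹ *
          (∏' k : ℕ, (1 - Real.exp (-((k : ℝ) + 1) * μ))⁻¹) ^ 2 :=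
  stmt13_general μ hμ n x hx
end
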